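/- arXiv:2003.09141 — 5 statements merged into one kernel-verified Lean document; each statement's English description precedes it below -/
import Mathlib

section
/- Let H : ℝ² → ℝ be smooth with H(x,y) = c₀ + x·y in a neighborhood of the origin. For c > c₀ close to c₀, consider the curve segment L_c ∩ U' = {(x, (c−c₀)/x) : (c−c₀)/δ < x < δ} inside the square (−δ,δ)². Then the integral of |∇H|^{−1} with respect to arc length over this segment tends to +∞ as c → c₀⁺. Specifically, ∫_{(c−c₀)/δ}^{δ} (x² + (c−c₀)²/x²)^{−1/2} √(1 + (c−c₀)²/x⁴) dx → +∞ as c → c₀⁺. -/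
open Real MeasureTheory intervalIntegral Filter Set

open scoped Topology

/-! On the branch `y = ε / x` the gradient norm is `√(x² + ε²/x²) = x √(1 + ε²/x⁴)`, so it cancels
the arc-length factor up to `x`, and the integral over `[ε/δ, δ]` is `log (δ² / ε) → +∞`. -/

lemma saddle_integrand_eq_inv (ε : ℝ) {x : ℝ} (hx : 0 < x) :
    (√(x ^ 2 + ε ^ 2 / x ^ 2))⁻¹ * √(1 + ε ^ 2 / x ^ 4) = x⁻¹ := by
  have hgrad : x ^ 2 + ε ^ 2 / x ^ 2 = x ^ 2 * (1 + ε ^ 2 / x ^ 4) := by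
    field_simp
  have harc : 0 < √(1 + ε ^ 2 / x ^ 4) := by positivity
  rw [hgrad, sqrt_mul (by positivity), sqrt_sq hx.le, mul_inv, mul_assoc,
    inv_mul_cancel₀ harc.ne', mul_one]

lemma integral_saddle_integrand (ε : ℝ) {a b : ℝ} (ha : 0 < a) (hb : 0 < b) :
    ∫ x in a..b, (√(x ^ 2 + ε ^ 2 / x ^ 2))⁻¹ * √(1 + ε ^ 2 / x ^ 4) = log (b / a) := by
  rw [integral_congr fun x hx ↦ saddle_integrand_eq_inv ε (lt_of_lt_of_le (lt_min ha hb) hx.1),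
    integral_inv_of_pos ha hb]

/-- for the saddle `H(x,y) = c₀ + xy`, the integral of `|∇H|⁻¹` with
respect to arc length along the level-set branch `{y = (c-c₀)/x, (c-c₀)/δ < x < δ}`
tends to `+∞` as `c → c₀⁺`:
`∫_{(c-c₀)/δ}^{δ} (x² + (c-c₀)²/x²)^{-1/2} √(1 + (c-c₀)²/x⁴) dx → +∞`. -/
theorem saddle_action_derivative_diverges (c₀ δ : ℝ) (hδ : 0 < δ) :
    Tendsto
      (fun c : ℝ => ∫ x in ((c - c₀) / δ)..δ,
        (Real.sqrt (x ^ 2 + (c - c₀) ^ 2 / x ^ 2))⁻¹ * Real.sqrt (1 + (c - c₀) ^ 2 / x ^ 4))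
      (nhdsWithin c₀ (Set.Ioi c₀)) atTop := by
  have hgap : Tendsto (fun c ↦ c - c₀) (𝓝[>] c₀) (𝓝[>] 0) := by
    refine tendsto_nhdsWithin_iff.2 ⟨?_, ?_⟩
    · simpa using (continuous_sub_right c₀).continuousWithinAt.tendsto (s := Ioi c₀) (x := c₀)
    · filter_upwards [self_mem_nhdsWithin] with c (hc : c₀ < c) using sub_pos.2 hc
  have hratio : Tendsto (fun c ↦ δ / ((c - c₀) / δ)) (𝓝[>] c₀) atTop := by
    refine (hgap.inv_tendsto_nhdsGT_zero.const_mul_atTop (mul_pos hδ hδ)).congr fun c ↦ ?_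
    simp only [Pi.inv_apply]
    field_simp
  refine (tendsto_log_atTop.comp hratio).congr' ?_
  filter_upwards [self_mem_nhdsWithin] with c (hc : c₀ < c)
  exact (integral_saddle_integrand _ (div_pos (sub_pos.2 hc) hδ) hδ).symm
end

section
/- Let H₁ : ℝ² → ℝ be smooth near the origin with H₁(x,y) = c₀ + ½(ux)² + o(x²+y²) for some u > 0, and suppose H₁ − c₀ ≤ ½(ux)² + ½(Cr)³ near 0 for some C > 0, where r = √(x²+y²). Let Ĩ(c) denote the Lebesgue area of {H₁ ≤ c} near the origin for c > c₀. Then Ĩ(c)/(c−c₀) ≥ (1/(uC(c−c₀)^{1/6}))·(1 − C²(c−c₀)^{1/3}/u²)^{1/2} for c close to c₀, and hence lim_{c→c₀⁺} Ĩ(c)/(c−c₀) = +∞. -/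
open Real MeasureTheory Filter Set Metric

/-- Auxiliary: a rectangle `[0,a] × [0,b]` contained in `S ⊆ ℝ²` gives the
volume lower bound `a * b ≤ volume S`. -/
lemma rect_vol_le (a b : ℝ) (S : Set (EuclideanSpace ℝ (Fin 2)))
    (hS : ∀ p : EuclideanSpace ℝ (Fin 2), p 0 ∈ Icc 0 a → p 1 ∈ Icc 0 b → p ∈ S) :
    ENNReal.ofReal a * ENNReal.ofReal b ≤ volume S := by
  have hsub : ((MeasurableEquiv.toLp 2 (Fin 2 → ℝ)).symm) ⁻¹'
      (Set.univ.pi (fun i => Icc 0 (if i = 0 then a else b))) ⊆ S := by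
    intro p hp
    exact hS p (by simpa using hp 0 (mem_univ _)) (by simpa using hp 1 (mem_univ _))
  have hvolA : volume (((MeasurableEquiv.toLp 2 (Fin 2 → ℝ)).symm) ⁻¹'
      (Set.univ.pi (fun i => Icc 0 (if i = 0 then a else b)))) =
      ENNReal.ofReal a * ENNReal.ofReal b := by
    rw [(EuclideanSpace.volume_preserving_symm_measurableEquiv_toLp (Fin 2)).measure_preimage
        (MeasurableSet.univ_pi (fun i => measurableSet_Icc)).nullMeasurableSet,
      volume_pi_pi]
    simp [Fin.prod_univ_two, Real.volume_Icc]
  rw [← hvolA]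
  exact measure_mono hsub

/-- if `H₁` has an isolated local minimum `c₀` at the origin which is
degenerate in the `y`-direction only, i.e. `H₁(p) ≤ c₀ + ½(u·x)² + ½(C‖p‖)³` near `0`
(with `u > 0`), then the area `Ĩ(c)` of the sublevel set `{H₁ ≤ c}` near the origin
satisfies `Ĩ(c)/(c-c₀) ≥ (uC(c-c₀)^{1/6})⁻¹ (1 - C²(c-c₀)^{1/3}/u²)^{1/2}` for `c > c₀`
close to `c₀`, and hence `Ĩ(c)/(c-c₀) → +∞` as `c → c₀⁺`. -/

theorem partially_degenerate_min_area_diverges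
    (H₁ : EuclideanSpace ℝ (Fin 2) → ℝ) (c₀ u C δ : ℝ)
    (hu : 0 < u) (hC : 0 < C) (hδ : 0 < δ)
    (hH : ContDiff ℝ (⊤ : ℕ∞) H₁) (h0 : H₁ 0 = c₀)
    (hiso : ∀ p ∈ closedBall (0 : EuclideanSpace ℝ (Fin 2)) δ, p ≠ 0 → c₀ < H₁ p)
    (hub : ∀ p ∈ closedBall (0 : EuclideanSpace ℝ (Fin 2)) δ,
      H₁ p ≤ c₀ + (u * p 0) ^ 2 / 2 + (C * ‖p‖) ^ 3 / 2) :
    (∀ᶠ c in nhdsWithin c₀ (Set.Ioi c₀),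
        (1 / (u * C * (c - c₀) ^ ((1 : ℝ) / 6))) *
            Real.sqrt (1 - C ^ 2 * (c - c₀) ^ ((1 : ℝ) / 3) / u ^ 2) ≤
          (volume {p ∈ closedBall (0 : EuclideanSpace ℝ (Fin 2)) δ | H₁ p ≤ c}).toReal
            / (c - c₀)) ∧
      Tendsto
        (fun c : ℝ =>
          (volume {p ∈ closedBall (0 : EuclideanSpace ℝ (Fin 2)) δ | H₁ p ≤ c}).toReal
            / (c - c₀))
        (nhdsWithin c₀ (Set.Ioi c₀)) atTop := by
  have hm : (0:ℝ) < min ((C*δ)^3) (u^6/C^6) := by positivity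
  -- The eventual lower bound
  have hev : ∀ᶠ c in nhdsWithin c₀ (Set.Ioi c₀),
      (1 / (u * C * (c - c₀) ^ ((1 : ℝ) / 6))) *
          Real.sqrt (1 - C ^ 2 * (c - c₀) ^ ((1 : ℝ) / 3) / u ^ 2) ≤
        (volume {p ∈ closedBall (0 : EuclideanSpace ℝ (Fin 2)) δ | H₁ p ≤ c}).toReal
          / (c - c₀) := by
    filter_upwards [Ioc_mem_nhdsGT_of_mem (by constructor <;> [rfl; linarith] :
        c₀ ∈ Ico c₀ (c₀ + min ((C*δ)^3) (u^6/C^6)))] with c hc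
    obtain ⟨hc1, hc2⟩ := hc
    obtain ⟨ε, hεdef⟩ : ∃ ε : ℝ, ε = c - c₀ := ⟨_, rfl⟩
    rw [← hεdef]
    have hε : 0 < ε := by rw [hεdef]; linarith
    have hεm : ε ≤ min ((C*δ)^3) (u^6/C^6) := by
      rw [hεdef]; linarith
    have hε13 : (0:ℝ) < ε ^ ((1:ℝ)/3) := Real.rpow_pos_of_pos hε _
    have hε16 : (0:ℝ) < ε ^ ((1:ℝ)/6) := Real.rpow_pos_of_pos hε _
    have hcube : ∀ t : ℝ, 0 ≤ t → ε ≤ t^3 → ε ^ ((1:ℝ)/3) ≤ t := by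
      intro t ht hεt
      have h1 : ε ^ ((1:ℝ)/3) ≤ (t^3) ^ ((1:ℝ)/3) :=
        Real.rpow_le_rpow hε.le hεt (by norm_num)
      have h2 : (t^3 : ℝ) ^ ((1:ℝ)/3) = t := by
        rw [← Real.rpow_natCast t 3, ← Real.rpow_mul ht]
        norm_num
      linarith [h1, h2.le, h2.ge]
    have hδ3 : ε ^ ((1:ℝ)/3) ≤ C * δ := by
      refine hcube _ (by positivity) (le_trans hεm (min_le_left _ _))
    have hu3 : ε ^ ((1:ℝ)/3) ≤ u^2 / C^2 := by
      refine hcube _ (by positivity) ?_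
      refine le_trans (le_trans hεm (min_le_right _ _)) (le_of_eq ?_)
      field_simp
    have hs0 : 0 ≤ 1 - C ^ 2 * ε ^ ((1:ℝ)/3) / u ^ 2 := by
      rw [sub_nonneg, div_le_one (by positivity)]
      calc C ^ 2 * ε ^ ((1:ℝ)/3) ≤ C^2 * (u^2/C^2) :=
            mul_le_mul_of_nonneg_left hu3 (by positivity)
        _ = u^2 := by field_simp
    obtain ⟨sq, hsqdef⟩ : ∃ sq : ℝ, sq = Real.sqrt (1 - C ^ 2 * ε ^ ((1:ℝ)/3) / u ^ 2) :=
      ⟨_, rfl⟩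
    rw [← hsqdef]
    have hsq0 : 0 ≤ sq := hsqdef ▸ Real.sqrt_nonneg _
    have hsq2 : sq^2 = 1 - C ^ 2 * ε ^ ((1:ℝ)/3) / u ^ 2 := by
      rw [hsqdef, Real.sq_sqrt hs0]
    obtain ⟨a, hadef⟩ : ∃ a : ℝ, a = Real.sqrt ε / u := ⟨_, rfl⟩
    obtain ⟨b, hbdef⟩ : ∃ b : ℝ, b = ε ^ ((1:ℝ)/3) / C * sq := ⟨_, rfl⟩
    have ha0 : 0 ≤ a := by rw [hadef]; positivity
    have hb0 : 0 ≤ b := by rw [hbdef]; positivity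
    have ha2 : a^2 = ε / u^2 := by
      rw [hadef, div_pow, Real.sq_sqrt hε.le]
    have hb2 : b^2 = ε ^ ((2:ℝ)/3) / C^2 - ε / u^2 := by
      rw [hbdef, mul_pow, div_pow, hsq2]
      have h23 : (ε ^ ((1:ℝ)/3))^2 = ε ^ ((2:ℝ)/3) := by
        rw [← Real.rpow_natCast (ε ^ ((1:ℝ)/3)) 2, ← Real.rpow_mul hε.le]; norm_num
      have h1 : ε ^ ((2:ℝ)/3) * ε ^ ((1:ℝ)/3) = ε := by
        rw [← Real.rpow_add hε]; norm_num
      have hC2 : (C:ℝ)^2 ≠ 0 := by positivity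
      have hu2 : (u:ℝ)^2 ≠ 0 := by positivity
      rw [h23]
      field_simp
      nlinarith only [h1]
    -- the rectangle is inside the sublevel set
    have hvol : ENNReal.ofReal a * ENNReal.ofReal b ≤
        volume {p ∈ closedBall (0 : EuclideanSpace ℝ (Fin 2)) δ | H₁ p ≤ c} := by
      refine rect_vol_le a b _ ?_
      intro p hp0 hp1
      have hnorm : ‖p‖ = Real.sqrt ((p 0)^2 + (p 1)^2) := by
        rw [EuclideanSpace.norm_eq, Fin.sum_univ_two]
        simp [Real.norm_eq_abs, sq_abs]
      have hnorm2 : ‖p‖^2 ≤ ε ^ ((2:ℝ)/3) / C^2 := by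
        rw [hnorm, Real.sq_sqrt (by positivity)]
        have h1 : (p 0)^2 ≤ a^2 := by nlinarith only [hp0.1, hp0.2]
        have h2 : (p 1)^2 ≤ b^2 := by nlinarith only [hp1.1, hp1.2]
        rw [ha2] at h1; rw [hb2] at h2; linarith only [h1, h2]
      have hnormle : ‖p‖ ≤ ε ^ ((1:ℝ)/3) / C := by
        have h13 : (ε ^ ((1:ℝ)/3) / C)^2 = ε ^ ((2:ℝ)/3) / C^2 := by
          rw [div_pow, ← Real.rpow_natCast (ε ^ ((1:ℝ)/3)) 2, ← Real.rpow_mul hε.le]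
          norm_num
        nlinarith only [norm_nonneg p, hnorm2, h13, div_nonneg hε13.le hC.le]
      have hball : p ∈ closedBall (0 : EuclideanSpace ℝ (Fin 2)) δ := by
        rw [mem_closedBall_zero_iff]
        calc ‖p‖ ≤ ε ^ ((1:ℝ)/3) / C := hnormle
          _ ≤ δ := by rw [div_le_iff₀ hC]; linarith only [hδ3]
      refine ⟨hball, ?_⟩
      have hcub : (C * ‖p‖)^3 ≤ ε := by
        have h1 : C * ‖p‖ ≤ ε ^ ((1:ℝ)/3) := by
          rw [mul_comm, ← le_div_iff₀ hC]; exact hnormle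
        have h2 : (ε ^ ((1:ℝ)/3))^3 = ε := by
          rw [← Real.rpow_natCast (ε ^ ((1:ℝ)/3)) 3, ← Real.rpow_mul hε.le]
          norm_num
        calc (C * ‖p‖)^3 ≤ (ε ^ ((1:ℝ)/3))^3 :=
              pow_le_pow_left₀ (by positivity) h1 3
          _ = ε := h2
      have hsqe : (u * p 0)^2 ≤ ε := by
        have h1 : (p 0)^2 ≤ a^2 := by nlinarith only [hp0.1, hp0.2]
        rw [ha2] at h1
        rw [mul_pow]
        calc u^2 * (p 0)^2 ≤ u^2 * (ε / u^2) :=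
              mul_le_mul_of_nonneg_left h1 (by positivity)
          _ = ε := by field_simp
      have hHp := hub p hball
      linarith only [hHp, hcub, hsqe, hεdef.le, hεdef.ge]
    have hfin : volume {p ∈ closedBall (0 : EuclideanSpace ℝ (Fin 2)) δ | H₁ p ≤ c} < ⊤ :=
      lt_of_le_of_lt (measure_mono (fun p hp => hp.1))
        (isCompact_closedBall _ _).measure_lt_top
    have hvolR : a * b ≤
        (volume {p ∈ closedBall (0 : EuclideanSpace ℝ (Fin 2)) δ | H₁ p ≤ c}).toReal := by
      have h := ENNReal.toReal_mono hfin.ne (le_trans (le_of_eq (ENNReal.ofReal_mul ha0)) hvol)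
      rwa [ENNReal.toReal_ofReal (by positivity)] at h
    -- identify a*b/ε with the lower bound
    have hab : a * b = (1 / (u * C * ε ^ ((1:ℝ)/6))) * sq * ε := by
      rw [hadef, hbdef, Real.sqrt_eq_rpow]
      have h1 : ε ^ ((1:ℝ)/2) * ε ^ ((1:ℝ)/3) * ε ^ ((1:ℝ)/6) = ε := by
        rw [mul_assoc, ← Real.rpow_add hε, ← Real.rpow_add hε]; norm_num
      field_simp
      linear_combination sq * h1
    rw [le_div_iff₀ hε, ← hab]
    exact hvolR
  refine ⟨hev, ?_⟩
  -- divergence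
  have hsub0 : Tendsto (fun c : ℝ => c - c₀) (nhdsWithin c₀ (Set.Ioi c₀))
      (nhdsWithin 0 (Set.Ioi 0)) := by
    apply tendsto_nhdsWithin_of_tendsto_nhds_of_eventually_within
    · have h : Tendsto (fun c : ℝ => c - c₀) (nhds c₀) (nhds (c₀ - c₀)) :=
        (continuous_sub_right c₀).tendsto c₀
      rw [sub_self] at h
      exact h.mono_left nhdsWithin_le_nhds
    · exact eventually_nhdsWithin_of_forall (fun c hc => mem_Ioi.mpr (sub_pos.mpr hc))
  have hrpow : ∀ q : ℝ, 0 < q → Tendsto (fun t : ℝ => t ^ q)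
      (nhdsWithin 0 (Set.Ioi 0)) (nhdsWithin 0 (Set.Ioi 0)) := by
    intro q hq
    apply tendsto_nhdsWithin_of_tendsto_nhds_of_eventually_within
    · have hcont : ContinuousAt (fun t : ℝ => t ^ q) 0 :=
        Real.continuousAt_rpow_const 0 q (Or.inr hq.le)
      have := hcont.tendsto
      rw [Real.zero_rpow hq.ne'] at this
      exact this.mono_left nhdsWithin_le_nhds
    · exact eventually_nhdsWithin_of_forall
        (fun t ht => Real.rpow_pos_of_pos ht q)
  have hfirst : Tendsto (fun c : ℝ => 1 / (u * C * (c - c₀) ^ ((1:ℝ)/6)))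
      (nhdsWithin c₀ (Set.Ioi c₀)) atTop := by
    have h1 : Tendsto (fun c : ℝ => u * C * (c - c₀) ^ ((1:ℝ)/6))
        (nhdsWithin c₀ (Set.Ioi c₀)) (nhdsWithin 0 (Set.Ioi 0)) := by
      apply tendsto_nhdsWithin_of_tendsto_nhds_of_eventually_within
      · have h2 := ((hrpow ((1:ℝ)/6) (by norm_num)).comp hsub0).mono_right
          nhdsWithin_le_nhds
        have := (tendsto_const_nhds (x := u * C) (f := nhdsWithin c₀ (Set.Ioi c₀))).mul h2
        simpa using this
      · apply eventually_nhdsWithin_of_forall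
        intro c hc
        have : (0:ℝ) < c - c₀ := sub_pos.mpr hc
        have := Real.rpow_pos_of_pos this ((1:ℝ)/6)
        exact mul_pos (mul_pos hu hC) this
    have h2 := tendsto_inv_nhdsGT_zero.comp h1
    have h3 : (fun c : ℝ => 1 / (u * C * (c - c₀) ^ ((1:ℝ)/6))) =
        (fun x : ℝ => x⁻¹) ∘ (fun c : ℝ => u * C * (c - c₀) ^ ((1:ℝ)/6)) := by
      funext x; simp [one_div]
    rw [h3]; exact h2
  have hsqrt : Tendsto (fun c : ℝ => Real.sqrt (1 - C ^ 2 * (c - c₀) ^ ((1:ℝ)/3) / u ^ 2))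
      (nhdsWithin c₀ (Set.Ioi c₀)) (nhds 1) := by
    have h1 : Tendsto (fun c : ℝ => (c - c₀) ^ ((1:ℝ)/3))
        (nhdsWithin c₀ (Set.Ioi c₀)) (nhds 0) :=
      ((hrpow ((1:ℝ)/3) (by norm_num)).comp hsub0).mono_right nhdsWithin_le_nhds
    have h2 : Tendsto (fun c : ℝ => 1 - C ^ 2 * (c - c₀) ^ ((1:ℝ)/3) / u ^ 2)
        (nhdsWithin c₀ (Set.Ioi c₀)) (nhds 1) := by
      have := ((h1.const_mul (C^2)).div_const (u^2)).const_sub 1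
      simpa using this
    have h3 : Tendsto Real.sqrt (nhds 1) (nhds 1) := by
      have := Real.continuous_sqrt.tendsto 1
      simpa using this
    exact h3.comp h2
  have hlb : Tendsto (fun c : ℝ => (1 / (u * C * (c - c₀) ^ ((1:ℝ)/6))) *
      Real.sqrt (1 - C ^ 2 * (c - c₀) ^ ((1:ℝ)/3) / u ^ 2))
      (nhdsWithin c₀ (Set.Ioi c₀)) atTop :=
    hfirst.atTop_mul_pos one_pos hsqrt
  exact tendsto_atTop_mono' _ hev hlb
end

section
/- Let ρ : ℝ² → ℝ be smooth with ρ > 0, and let H₁(x,y) = c₀ + ½(x²+y²). In polar coordinates (r,θ), the second derivative of the area function Ĩ(c) = ∫_{{H₁ ≤ c}} ρ dx dy satisfies: writing c = c₀ + ½r_c², one has (d²Ĩ/dc²)(c) = ∫_0^{2π} (∂_r ρ(r_c, θ)/r_c) dθ, and lim_{c→c₀⁺} (d²Ĩ/dc²)(c) = π Δρ(0), where Δρ(0) = ∂²_{xx}ρ(0) + ∂²_{yy}ρ(0) is the Laplacian of ρ at the origin. -/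
open Real MeasureTheory Filter Set intervalIntegral

section Aux

private lemma polar_step7 (ρ : ℝ × ℝ → ℝ) (hρc : Continuous ρ) (R : ℝ) (hR : 0 ≤ R) :
    (∫ p in {p : ℝ × ℝ | p.1 ^ 2 + p.2 ^ 2 ≤ R ^ 2}, ρ p)
      = ∫ r in (0:ℝ)..R, ∫ θ in (-π)..π, r * ρ (r * Real.cos θ, r * Real.sin θ) := by
  have hdisk : MeasurableSet {p : ℝ × ℝ | p.1 ^ 2 + p.2 ^ 2 ≤ R ^ 2} := by
    apply measurableSet_le <;> fun_prop
  have key := integral_comp_polarCoord_symm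
    (Set.indicator {p : ℝ × ℝ | p.1 ^ 2 + p.2 ^ 2 ≤ R ^ 2} ρ)
  rw [MeasureTheory.integral_indicator hdisk] at key
  rw [← key]
  have htar : polarCoord.target = Ioi (0:ℝ) ×ˢ Ioo (-π) π := rfl
  have hmt : MeasurableSet polarCoord.target := polarCoord.open_target.measurableSet
  have hcont : Continuous fun p : ℝ × ℝ => p.1 * ρ (p.1 * Real.cos p.2, p.1 * Real.sin p.2) := by
    fun_prop
  have step1 : (∫ p in polarCoord.target,
        p.1 • Set.indicator {p : ℝ × ℝ | p.1 ^ 2 + p.2 ^ 2 ≤ R ^ 2} ρ (polarCoord.symm p))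
      = ∫ p in polarCoord.target,
          Set.indicator {p : ℝ × ℝ | p.1 ≤ R}
            (fun p : ℝ × ℝ => p.1 * ρ (p.1 * Real.cos p.2, p.1 * Real.sin p.2)) p := by
    apply setIntegral_congr_fun hmt
    intro p hp
    rw [htar] at hp
    have hp1 : 0 < p.1 := hp.1
    have hid : (p.1 * Real.cos p.2) ^ 2 + (p.1 * Real.sin p.2) ^ 2 = p.1 ^ 2 := by
      rw [mul_pow, mul_pow, ← mul_add, Real.cos_sq_add_sin_sq, mul_one]
    have hcond : polarCoord.symm p ∈ {p : ℝ × ℝ | p.1 ^ 2 + p.2 ^ 2 ≤ R ^ 2} ↔ p.1 ≤ R := by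
      simp only [polarCoord_symm_apply, mem_setOf_eq, hid]
      constructor
      · intro h
        exact (abs_le_of_sq_le_sq' h hR).2
      · intro h
        exact pow_le_pow_left₀ hp1.le h 2
    dsimp only
    by_cases hc : p.1 ≤ R
    · rw [Set.indicator_of_mem (hcond.2 hc),
        Set.indicator_of_mem (show p ∈ {p : ℝ × ℝ | p.1 ≤ R} from hc)]
      exact smul_eq_mul _ _
    · rw [Set.indicator_of_notMem (fun hm => hc (hcond.1 hm)),
        Set.indicator_of_notMem (show p ∉ {p : ℝ × ℝ | p.1 ≤ R} from hc), smul_zero]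
  rw [step1, MeasureTheory.setIntegral_indicator (measurableSet_le (by fun_prop) (by fun_prop))]
  have hset : polarCoord.target ∩ {p : ℝ × ℝ | p.1 ≤ R} = Ioc (0:ℝ) R ×ˢ Ioo (-π) π := by
    rw [htar]; ext p
    simp only [mem_inter_iff, mem_prod, mem_Ioi, mem_Ioo, mem_setOf_eq, mem_Ioc]
    tauto
  rw [hset]
  have hint : IntegrableOn (fun p : ℝ × ℝ => p.1 * ρ (p.1 * Real.cos p.2, p.1 * Real.sin p.2))
      (Ioc (0:ℝ) R ×ˢ Ioo (-π) π) := by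
    apply (hcont.continuousOn.integrableOn_compact
      ((isCompact_Icc (a := (0:ℝ)) (b := R)).prod (isCompact_Icc (a := -π) (b := π)))).mono_set
    exact Set.prod_mono Ioc_subset_Icc_self Ioo_subset_Icc_self
  rw [Measure.volume_eq_prod] at hint ⊢
  rw [MeasureTheory.setIntegral_prod _ hint]
  rw [intervalIntegral.integral_of_le hR]
  apply setIntegral_congr_fun measurableSet_Ioc
  intro r _
  dsimp only
  rw [intervalIntegral.integral_of_le (by linarith [pi_pos] : -π ≤ π),
    ← MeasureTheory.integral_Ioc_eq_integral_Ioo]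

private lemma subst_step7 (g : ℝ → ℝ) (hg : Continuous g) (R : ℝ) (hR : 0 ≤ R) :
    ∫ r in (0:ℝ)..R, r * g r = ∫ u in (0:ℝ)..(R ^ 2 / 2), g (Real.sqrt (2 * u)) := by
  have h := intervalIntegral.integral_comp_smul_deriv (a := 0) (b := R)
    (f := fun r => r ^ 2 / 2) (f' := fun r => r) (g := fun u => g (Real.sqrt (2 * u)))
    (fun x _ => by simpa using ((hasDerivAt_pow 2 x).div_const 2))
    (continuous_id.continuousOn) (by fun_prop)
  simp only [smul_eq_mul, Function.comp] at h
  have h0 : (0:ℝ) ^ 2 / 2 = 0 := by norm_num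
  rw [h0] at h
  rw [← h]
  apply intervalIntegral.integral_congr
  intro r hr
  rw [Set.uIcc_of_le hR] at hr
  have h2 : 2 * (r ^ 2 / 2) = r ^ 2 := by ring
  dsimp only
  rw [h2, Real.sqrt_sq hr.1]

private noncomputable def gfun7 (ρ : ℝ × ℝ → ℝ) (r : ℝ) : ℝ :=
  ∫ θ in (-π)..π, ρ (r * Real.cos θ, r * Real.sin θ)

private noncomputable def Gfun7 (ρ : ℝ × ℝ → ℝ) (u : ℝ) : ℝ := gfun7 ρ (Real.sqrt (2 * u))

private lemma cont_gfun7 (ρ : ℝ × ℝ → ℝ) (hρc : Continuous ρ) : Continuous (gfun7 ρ) := by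
  apply intervalIntegral.continuous_parametric_intervalIntegral_of_continuous'
  fun_prop

private lemma cont_Gfun7 (ρ : ℝ × ℝ → ℝ) (hρc : Continuous ρ) : Continuous (Gfun7 ρ) :=
  (cont_gfun7 ρ hρc).comp (by fun_prop)

private lemma key_eq7 (ρ : ℝ × ℝ → ℝ) (hρc : Continuous ρ) (t : ℝ) (ht : 0 ≤ t) :
    (∫ p in {p : ℝ × ℝ | p.1 ^ 2 + p.2 ^ 2 ≤ 2 * t}, ρ p) = ∫ u in (0:ℝ)..t, Gfun7 ρ u := by
  have h2t : (Real.sqrt (2 * t)) ^ 2 = 2 * t := Real.sq_sqrt (by linarith)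
  have hs : {p : ℝ × ℝ | p.1 ^ 2 + p.2 ^ 2 ≤ 2 * t}
      = {p : ℝ × ℝ | p.1 ^ 2 + p.2 ^ 2 ≤ (Real.sqrt (2 * t)) ^ 2} := by
    rw [h2t]
  rw [hs, polar_step7 ρ hρc _ (Real.sqrt_nonneg _)]
  have hinner : ∀ r : ℝ, (∫ θ in (-π)..π, r * ρ (r * Real.cos θ, r * Real.sin θ))
      = r * gfun7 ρ r := fun r => intervalIntegral.integral_const_mul _ _
  rw [intervalIntegral.integral_congr (fun r _ => hinner r),
    subst_step7 (gfun7 ρ) (cont_gfun7 ρ hρc) _ (Real.sqrt_nonneg _), h2t]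
  norm_num [Gfun7]

private lemma derivI_eq7 (ρ : ℝ × ℝ → ℝ) (hρc : Continuous ρ) (c₀ : ℝ) {c : ℝ} (hc : c₀ < c) :
    deriv (fun c' : ℝ =>
        ∫ p in {p : ℝ × ℝ | p.1 ^ 2 + p.2 ^ 2 ≤ 2 * (c' - c₀)}, ρ p) c
      = Gfun7 ρ (c - c₀) := by
  have hev : (fun c' : ℝ =>
      ∫ p in {p : ℝ × ℝ | p.1 ^ 2 + p.2 ^ 2 ≤ 2 * (c' - c₀)}, ρ p)
      =ᶠ[nhds c] (fun c' : ℝ => ∫ u in (0:ℝ)..(c' - c₀), Gfun7 ρ u) := by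
    filter_upwards [Ioi_mem_nhds hc] with x hx
    exact key_eq7 ρ hρc (x - c₀) (by simp only [mem_Ioi] at hx; linarith)
  rw [Filter.EventuallyEq.deriv_eq hev]
  have hG := cont_Gfun7 ρ hρc
  have h0 : HasDerivAt (fun t : ℝ => ∫ u in (0:ℝ)..t, Gfun7 ρ u) (Gfun7 ρ (c - c₀)) (c - c₀) :=
    intervalIntegral.integral_hasDerivAt_right (hG.intervalIntegrable _ _)
      (hG.stronglyMeasurableAtFilter _ _) hG.continuousAt
  have h1 : HasDerivAt (fun c' : ℝ => ∫ u in (0:ℝ)..(c' - c₀), Gfun7 ρ u)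
      (Gfun7 ρ (c - c₀)) c := by
    have := h0.comp c ((hasDerivAt_id c).sub_const c₀)
    exact this.congr_deriv (mul_one _)
  exact h1.deriv

private lemma hasDerivAt_inner7 (ρ : ℝ × ℝ → ℝ) (hρ : ContDiff ℝ (⊤ : ℕ∞) ρ) (r θ : ℝ) :
    HasDerivAt (fun s : ℝ => ρ (s * Real.cos θ, s * Real.sin θ))
      (fderiv ℝ ρ (r * Real.cos θ, r * Real.sin θ) (Real.cos θ, Real.sin θ)) r := by
  have h1 : HasDerivAt (fun s : ℝ => (s * Real.cos θ, s * Real.sin θ))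
      (Real.cos θ, Real.sin θ) r :=
    HasDerivAt.prodMk (hasDerivAt_mul_const _) (hasDerivAt_mul_const _)
  exact ((hρ.differentiable (by simp) _).hasFDerivAt).comp_hasDerivAt r h1

private lemma cont_D7 (ρ : ℝ × ℝ → ℝ) (hρ : ContDiff ℝ (⊤ : ℕ∞) ρ) :
    Continuous fun p : ℝ × ℝ =>
      fderiv ℝ ρ (p.1 * Real.cos p.2, p.1 * Real.sin p.2) (Real.cos p.2, Real.sin p.2) := by
  apply Continuous.clm_apply
  · exact (hρ.continuous_fderiv (by simp)).comp (by fun_prop)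
  · fun_prop

private lemma hasDerivAt_g7 (ρ : ℝ × ℝ → ℝ) (hρ : ContDiff ℝ (⊤ : ℕ∞) ρ) (r : ℝ) :
    HasDerivAt (fun x : ℝ => ∫ θ in (-π)..π, ρ (x * Real.cos θ, x * Real.sin θ))
      (∫ θ in (-π)..π,
        fderiv ℝ ρ (r * Real.cos θ, r * Real.sin θ) (Real.cos θ, Real.sin θ)) r := by
  have hρc : Continuous ρ := hρ.continuous
  set D : ℝ → ℝ → ℝ := fun x θ =>
    fderiv ℝ ρ (x * Real.cos θ, x * Real.sin θ) (Real.cos θ, Real.sin θ) with hD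
  obtain ⟨C, hC⟩ : ∃ C, ∀ q ∈ Icc (r - 1) (r + 1) ×ˢ Icc (-π) π, |D q.1 q.2| ≤ C := by
    obtain ⟨C, hC⟩ := (isCompact_Icc.prod isCompact_Icc).exists_bound_of_continuousOn
      ((cont_D7 ρ hρ).continuousOn)
    exact ⟨C, fun q hq => by simpa [Real.norm_eq_abs] using hC q hq⟩
  refine (intervalIntegral.hasDerivAt_integral_of_dominated_loc_of_deriv_le
    (F := fun x θ => ρ (x * Real.cos θ, x * Real.sin θ)) (F' := D)
    (bound := fun _ => C) (Metric.ball_mem_nhds r one_pos)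
    ?_ ?_ ?_ ?_ ?_ ?_).2
  · filter_upwards with x
    exact (Continuous.aestronglyMeasurable (by fun_prop)).restrict
  · exact (Continuous.intervalIntegrable (by fun_prop) _ _)
  · exact (Continuous.aestronglyMeasurable
      ((cont_D7 ρ hρ).comp (continuous_const.prodMk continuous_id))).restrict
  · filter_upwards with θ hθ x hx
    have hθ' : θ ∈ Icc (-π) π := by
      refine mem_Icc.2 ⟨?_, ?_⟩ <;>
      · rcases Set.mem_uIoc.1 hθ with h | h <;> [skip; skip] <;>
        · have := h.1; have := h.2; first | linarith | linarith [pi_pos]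
    have hx' : x ∈ Icc (r - 1) (r + 1) := by
      rw [Metric.mem_ball, Real.dist_eq] at hx
      constructor <;> [linarith [abs_lt.1 hx |>.1]; linarith [abs_lt.1 hx |>.2]]
    exact hC (x, θ) ⟨hx', hθ'⟩
  · exact intervalIntegrable_const
  · filter_upwards with θ _ x _
    exact hasDerivAt_inner7 ρ hρ x θ

private lemma Gshift_hasDeriv7 (ρ : ℝ × ℝ → ℝ) (hρ : ContDiff ℝ (⊤ : ℕ∞) ρ) (c₀ : ℝ) {c : ℝ}
    (hc : c₀ < c) :
    HasDerivAt (fun c' : ℝ => Gfun7 ρ (c' - c₀))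
      ((∫ θ in (-π)..π,
        fderiv ℝ ρ (Real.sqrt (2*(c-c₀)) * Real.cos θ, Real.sqrt (2*(c-c₀)) * Real.sin θ)
          (Real.cos θ, Real.sin θ)) * (1 / Real.sqrt (2*(c-c₀)))) c := by
  set r := Real.sqrt (2*(c-c₀)) with hrdef
  have h2 : (0:ℝ) < 2*(c-c₀) := by linarith
  have hrpos : 0 < r := Real.sqrt_pos.2 h2
  have hin : HasDerivAt (fun c' : ℝ => 2*(c'-c₀)) 2 c := by
    simpa using ((hasDerivAt_id c).sub_const c₀).const_mul 2
  have hr : HasDerivAt (fun c' : ℝ => Real.sqrt (2*(c'-c₀))) (1/r) c := by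
    have := (Real.hasDerivAt_sqrt (ne_of_gt h2)).comp c hin
    refine this.congr_deriv ?_
    rw [hrdef]
    field_simp
  have hg := hasDerivAt_g7 ρ hρ r
  exact (hg.comp c hr :)

private lemma deriv2_eq7 (ρ : ℝ × ℝ → ℝ) (hρ : ContDiff ℝ (⊤ : ℕ∞) ρ) (c₀ : ℝ) {c : ℝ} (hc : c₀ < c) :
    deriv (deriv (fun c' : ℝ =>
        ∫ p in {p : ℝ × ℝ | p.1 ^ 2 + p.2 ^ 2 ≤ 2 * (c' - c₀)}, ρ p)) c
      = ∫ θ in (0:ℝ)..(2*π),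
          fderiv ℝ ρ (Real.sqrt (2*(c-c₀)) * Real.cos θ, Real.sqrt (2*(c-c₀)) * Real.sin θ)
            (Real.cos θ, Real.sin θ) / Real.sqrt (2*(c-c₀)) := by
  have hρc : Continuous ρ := hρ.continuous
  have hev : deriv (fun c' : ℝ =>
      ∫ p in {p : ℝ × ℝ | p.1 ^ 2 + p.2 ^ 2 ≤ 2 * (c' - c₀)}, ρ p)
      =ᶠ[nhds c] fun c' => Gfun7 ρ (c' - c₀) := by
    filter_upwards [Ioi_mem_nhds hc] with x hx
    exact derivI_eq7 ρ hρc c₀ hx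
  rw [hev.deriv_eq, (Gshift_hasDeriv7 ρ hρ c₀ hc).deriv]
  set r := Real.sqrt (2*(c-c₀)) with hrdef
  rw [mul_one_div, ← intervalIntegral.integral_div]
  have hper : Function.Periodic (fun θ : ℝ =>
      fderiv ℝ ρ (r * Real.cos θ, r * Real.sin θ) (Real.cos θ, Real.sin θ) / r) (2*π) := by
    intro θ
    simp [Real.cos_add_two_pi, Real.sin_add_two_pi]
  have hp := hper.intervalIntegral_add_eq (-π) 0
  rw [show -π + 2*π = π by ring, zero_add] at hp
  rw [hp]

private lemma secondDeriv_x7 (ρ : ℝ × ℝ → ℝ) (hρ : ContDiff ℝ (⊤ : ℕ∞) ρ) :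
    deriv (deriv (fun x : ℝ => ρ (x, 0))) 0
      = fderiv ℝ (fderiv ℝ ρ) 0 (1, 0) (1, 0) := by
  have hF : ContDiff ℝ (⊤ : ℕ∞) (fderiv ℝ ρ) := hρ.fderiv_right (by simp)
  have h1 : ∀ x : ℝ, HasDerivAt (fun x : ℝ => ρ (x, 0)) (fderiv ℝ ρ (x, 0) (1, 0)) x := by
    intro x
    exact ((hρ.differentiable (by simp) _).hasFDerivAt).comp_hasDerivAt x
      (HasDerivAt.prodMk (hasDerivAt_id x) (hasDerivAt_const x 0))
  have he : deriv (fun x : ℝ => ρ (x, 0)) = fun x : ℝ => fderiv ℝ ρ (x, 0) (1, 0) :=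
    funext fun x => (h1 x).deriv
  rw [he]
  have h2 : HasDerivAt (fun x : ℝ => fderiv ℝ ρ (x, 0))
      (fderiv ℝ (fderiv ℝ ρ) ((0:ℝ), (0:ℝ)) (1, 0)) 0 :=
    ((hF.differentiable (by simp) _).hasFDerivAt).comp_hasDerivAt 0
      (HasDerivAt.prodMk (hasDerivAt_id 0) (hasDerivAt_const 0 0))
  have h3 := h2.clm_apply (hasDerivAt_const (0:ℝ) (((1:ℝ), (0:ℝ)) : ℝ × ℝ))
  simp only [map_zero, add_zero] at h3
  rw [h3.deriv]
  norm_num [Prod.mk_zero_zero]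

private lemma secondDeriv_y7 (ρ : ℝ × ℝ → ℝ) (hρ : ContDiff ℝ (⊤ : ℕ∞) ρ) :
    deriv (deriv (fun y : ℝ => ρ (0, y))) 0
      = fderiv ℝ (fderiv ℝ ρ) 0 (0, 1) (0, 1) := by
  have hF : ContDiff ℝ (⊤ : ℕ∞) (fderiv ℝ ρ) := hρ.fderiv_right (by simp)
  have h1 : ∀ y : ℝ, HasDerivAt (fun y : ℝ => ρ (0, y)) (fderiv ℝ ρ (0, y) (0, 1)) y := by
    intro y
    exact ((hρ.differentiable (by simp) _).hasFDerivAt).comp_hasDerivAt y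
      (HasDerivAt.prodMk (hasDerivAt_const y 0) (hasDerivAt_id y))
  have he : deriv (fun y : ℝ => ρ (0, y)) = fun y : ℝ => fderiv ℝ ρ (0, y) (0, 1) :=
    funext fun y => (h1 y).deriv
  rw [he]
  have h2 : HasDerivAt (fun y : ℝ => fderiv ℝ ρ (0, y))
      (fderiv ℝ (fderiv ℝ ρ) ((0:ℝ), (0:ℝ)) (0, 1)) 0 :=
    ((hF.differentiable (by simp) _).hasFDerivAt).comp_hasDerivAt 0
      (HasDerivAt.prodMk (hasDerivAt_const 0 0) (hasDerivAt_id 0))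
  have h3 := h2.clm_apply (hasDerivAt_const (0:ℝ) (((0:ℝ), (1:ℝ)) : ℝ × ℝ))
  simp only [map_zero, add_zero] at h3
  rw [h3.deriv]
  norm_num [Prod.mk_zero_zero]

private lemma int_lin7 (L : ℝ × ℝ →L[ℝ] ℝ) :
    ∫ θ in (0:ℝ)..(2*π), L (Real.cos θ, Real.sin θ) = 0 := by
  have h : ∀ θ : ℝ, L (Real.cos θ, Real.sin θ)
      = Real.cos θ * L (1, 0) + Real.sin θ * L (0, 1) := by
    intro θ
    have : ((Real.cos θ, Real.sin θ) : ℝ × ℝ)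
        = Real.cos θ • ((1:ℝ), (0:ℝ)) + Real.sin θ • ((0:ℝ), (1:ℝ)) := by
      simp [Prod.ext_iff]
    rw [this, map_add, _root_.map_smul, _root_.map_smul, smul_eq_mul, smul_eq_mul]
  rw [intervalIntegral.integral_congr (fun θ _ => h θ)]
  rw [intervalIntegral.integral_add
    ((Continuous.intervalIntegrable (by fun_prop) _ _))
    ((Continuous.intervalIntegrable (by fun_prop) _ _)),
    intervalIntegral.integral_mul_const, intervalIntegral.integral_mul_const,
    integral_cos, integral_sin]
  simp [Real.sin_two_pi, Real.cos_two_pi]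

private lemma int_quad7 (B : ℝ × ℝ →L[ℝ] (ℝ × ℝ →L[ℝ] ℝ)) :
    ∫ θ in (0:ℝ)..(2*π), B (Real.cos θ, Real.sin θ) (Real.cos θ, Real.sin θ)
      = π * (B (1,0) (1,0) + B (0,1) (0,1)) := by
  set a := B (1,0) (1,0); set b := B (1,0) (0,1); set b' := B (0,1) (1,0); set d := B (0,1) (0,1)
  have h : ∀ θ : ℝ, B (Real.cos θ, Real.sin θ) (Real.cos θ, Real.sin θ)
      = a * Real.cos θ ^ 2 + (b + b') * (Real.sin θ * Real.cos θ) + d * Real.sin θ ^ 2 := by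
    intro θ
    have he : ((Real.cos θ, Real.sin θ) : ℝ × ℝ)
        = Real.cos θ • ((1:ℝ), (0:ℝ)) + Real.sin θ • ((0:ℝ), (1:ℝ)) := by
      simp [Prod.ext_iff]
    rw [he, map_add, _root_.map_smul, _root_.map_smul]
    simp only [ContinuousLinearMap.add_apply, ContinuousLinearMap.coe_smul',
      Pi.smul_apply, map_add, _root_.map_smul, smul_eq_mul]
    ring
  rw [intervalIntegral.integral_congr (fun θ _ => h θ)]
  rw [intervalIntegral.integral_add (Continuous.intervalIntegrable (by fun_prop) _ _)
      (Continuous.intervalIntegrable (by fun_prop) _ _),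
    intervalIntegral.integral_add (Continuous.intervalIntegrable (by fun_prop) _ _)
      (Continuous.intervalIntegrable (by fun_prop) _ _),
    intervalIntegral.integral_const_mul, intervalIntegral.integral_const_mul,
    intervalIntegral.integral_const_mul, integral_cos_sq, integral_sin_sq,
    integral_sin_mul_cos₁]
  simp [Real.sin_two_pi, Real.cos_two_pi]
  ring

private lemma norm_e_le7 (θ : ℝ) : ‖((Real.cos θ, Real.sin θ) : ℝ × ℝ)‖ ≤ 1 := by
  rw [Prod.norm_def]
  exact max_le (by rw [Real.norm_eq_abs]; exact abs_cos_le_one θ)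
    (by rw [Real.norm_eq_abs]; exact abs_sin_le_one θ)

private lemma tendsto_psi7 (ρ : ℝ × ℝ → ℝ) (hρ : ContDiff ℝ (⊤ : ℕ∞) ρ) :
    Filter.Tendsto (fun r : ℝ => ∫ θ in (0:ℝ)..(2*π),
        fderiv ℝ ρ (r * Real.cos θ, r * Real.sin θ) (Real.cos θ, Real.sin θ) / r)
      (nhdsWithin 0 (Set.Ioi 0))
      (nhds (π * (fderiv ℝ (fderiv ℝ ρ) 0 (1,0) (1,0)
        + fderiv ℝ (fderiv ℝ ρ) 0 (0,1) (0,1)))) := by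
  set F := fderiv ℝ ρ with hFdef
  set H := fderiv ℝ F with hHdef
  have hF : ContDiff ℝ (⊤ : ℕ∞) F := hρ.fderiv_right (by simp)
  have hHc : Continuous H := hF.continuous_fderiv (by simp)
  set L := π * (H 0 (1,0) (1,0) + H 0 (0,1) (0,1)) with hLdef
  rw [Metric.tendsto_nhdsWithin_nhds]
  intro ε hε
  set ε' := ε / 7 with hε'def
  have hε' : 0 < ε' := by positivity
  obtain ⟨δ, hδ, hδH⟩ := (Metric.continuousAt_iff (f := H) (a := 0)).1 hHc.continuousAt ε' hε'
  refine ⟨min δ 1, by positivity, ?_⟩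
  intro r hr hrd
  have hr0 : 0 < r := hr
  rw [Real.dist_eq, sub_zero, abs_of_pos hr0] at hrd
  have hrδ : r < δ := lt_of_lt_of_le hrd (min_le_left _ _)
  have hpt : ∀ θ : ℝ,
      |F (r * Real.cos θ, r * Real.sin θ) (Real.cos θ, Real.sin θ) / r
        - F 0 (Real.cos θ, Real.sin θ) / r
        - H 0 (Real.cos θ, Real.sin θ) (Real.cos θ, Real.sin θ)| ≤ ε' := by
    intro θ
    set e : ℝ × ℝ := (Real.cos θ, Real.sin θ) with hedef
    set Q : ℝ := H 0 e e with hQdef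
    set φ : ℝ → ℝ := fun s => F (s * Real.cos θ, s * Real.sin θ) e - s * Q with hφdef
    have hφ' : ∀ s : ℝ, HasDerivAt φ
        (H (s * Real.cos θ, s * Real.sin θ) e e - Q) s := by
      intro s
      have hin : HasDerivAt (fun s : ℝ => (s * Real.cos θ, s * Real.sin θ)) e s :=
        HasDerivAt.prodMk (hasDerivAt_mul_const _) (hasDerivAt_mul_const _)
      have hFc : HasDerivAt (fun s : ℝ => F (s * Real.cos θ, s * Real.sin θ))
          (H (s * Real.cos θ, s * Real.sin θ) e) s :=
        ((hF.differentiable (by simp) _).hasFDerivAt).comp_hasDerivAt s hin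
      have h1 := hFc.clm_apply (hasDerivAt_const s e)
      simp only [map_zero, add_zero] at h1
      exact h1.sub (hasDerivAt_mul_const Q)
    have hbd : ∀ s ∈ Icc (0:ℝ) r, ‖H (s * Real.cos θ, s * Real.sin θ) e e - Q‖ ≤ ε' := by
      intro s hs
      have hnorm : ‖((s * Real.cos θ, s * Real.sin θ) : ℝ × ℝ)‖ ≤ s := by
        rw [Prod.norm_def]
        apply max_le
        · rw [Real.norm_eq_abs, abs_mul, abs_of_nonneg hs.1]
          exact mul_le_of_le_one_right hs.1 (abs_cos_le_one θ)
        · rw [Real.norm_eq_abs, abs_mul, abs_of_nonneg hs.1]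
          exact mul_le_of_le_one_right hs.1 (abs_sin_le_one θ)
      have hdist : dist ((s * Real.cos θ, s * Real.sin θ) : ℝ × ℝ) 0 < δ := by
        rw [dist_zero_right]
        exact lt_of_le_of_lt hnorm (lt_of_le_of_lt hs.2 hrδ)
      have hHd := le_of_lt (hδH hdist)
      replace hHd : ‖H (s * Real.cos θ, s * Real.sin θ) - H 0‖ ≤ ε' := by
        exact (dist_eq_norm (H (s * Real.cos θ, s * Real.sin θ)) (H 0)).symm.trans_le (by exact hHd)
      calc ‖H (s * Real.cos θ, s * Real.sin θ) e e - Q‖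
          = ‖(H (s * Real.cos θ, s * Real.sin θ) - H 0) e e‖ := by
            simp [ContinuousLinearMap.sub_apply, hQdef]
        _ ≤ ‖(H (s * Real.cos θ, s * Real.sin θ) - H 0) e‖ * ‖e‖ :=
            ContinuousLinearMap.le_opNorm _ _
        _ ≤ (‖H (s * Real.cos θ, s * Real.sin θ) - H 0‖ * ‖e‖) * ‖e‖ := by
            gcongr
            exact ContinuousLinearMap.le_opNorm _ _
        _ ≤ (ε' * 1) * 1 := by
            apply mul_le_mul _ (norm_e_le7 θ) (norm_nonneg _) (by positivity)
            exact mul_le_mul hHd (norm_e_le7 θ) (norm_nonneg _) hε'.le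
        _ = ε' := by ring
    have hmvt := Convex.norm_image_sub_le_of_norm_hasDerivWithin_le
      (f := φ) (f' := fun s => H (s * Real.cos θ, s * Real.sin θ) e e - Q)
      (fun s hs => (hφ' s).hasDerivWithinAt) hbd (convex_Icc 0 r)
      (left_mem_Icc.2 hr0.le) (right_mem_Icc.2 hr0.le)
    have hφr : φ r - φ 0 = F (r * Real.cos θ, r * Real.sin θ) e - r * Q - F 0 e := by
      simp only [hφdef, zero_mul, sub_zero, mul_comm]
      norm_num
      rfl
    rw [hφr] at hmvt
    rw [Real.norm_eq_abs, sub_zero, Real.norm_eq_abs, abs_of_pos hr0] at hmvt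
    have heq : F (r * Real.cos θ, r * Real.sin θ) e / r - F 0 e / r - Q
        = (F (r * Real.cos θ, r * Real.sin θ) e - r * Q - F 0 e) / r := by
      field_simp
      ring
    rw [heq, abs_div, abs_of_pos hr0]
    exact (div_le_iff₀ hr0).2 (by linarith [hmvt])
  have hcont1 : Continuous fun θ : ℝ =>
      F (r * Real.cos θ, r * Real.sin θ) (Real.cos θ, Real.sin θ) / r :=
    ((cont_D7 ρ hρ).comp (continuous_const.prodMk continuous_id)).div_const r
  have hcont2 : Continuous fun θ : ℝ => F 0 (Real.cos θ, Real.sin θ) / r := by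
    apply Continuous.div_const
    exact (F 0).continuous.comp (by fun_prop)
  have hcont3 : Continuous fun θ : ℝ =>
      H 0 (Real.cos θ, Real.sin θ) (Real.cos θ, Real.sin θ) := by
    apply Continuous.clm_apply
    · exact (H 0).continuous.comp (by fun_prop)
    · fun_prop
  have hsplit : (∫ θ in (0:ℝ)..(2*π),
      (F (r * Real.cos θ, r * Real.sin θ) (Real.cos θ, Real.sin θ) / r
        - F 0 (Real.cos θ, Real.sin θ) / r
        - H 0 (Real.cos θ, Real.sin θ) (Real.cos θ, Real.sin θ)))
      = (∫ θ in (0:ℝ)..(2*π),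
          F (r * Real.cos θ, r * Real.sin θ) (Real.cos θ, Real.sin θ) / r) - 0 - L := by
    rw [intervalIntegral.integral_sub ((by exact hcont1.sub hcont2 : Continuous fun θ : ℝ => F (r * Real.cos θ, r * Real.sin θ) (Real.cos θ, Real.sin θ) / r - F 0 (Real.cos θ, Real.sin θ) / r).intervalIntegrable _ _)
        (hcont3.intervalIntegrable _ _),
      intervalIntegral.integral_sub (hcont1.intervalIntegrable _ _)
        (hcont2.intervalIntegrable _ _)]
    congr 1
    · congr 1
      rw [intervalIntegral.integral_div, int_lin7 (F 0), zero_div]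
    · exact int_quad7 (H 0)
  have hbound := intervalIntegral.norm_integral_le_of_norm_le_const
    (C := ε') (a := (0:ℝ)) (b := 2*π)
    (f := fun θ => F (r * Real.cos θ, r * Real.sin θ) (Real.cos θ, Real.sin θ) / r
        - F 0 (Real.cos θ, Real.sin θ) / r
        - H 0 (Real.cos θ, Real.sin θ) (Real.cos θ, Real.sin θ))
    (fun θ _ => by rw [Real.norm_eq_abs]; exact hpt θ)
  rw [hsplit] at hbound
  rw [Real.dist_eq]
  have h2π : |2*π - 0| = 2*π := by
    rw [sub_zero, abs_of_pos (by positivity)]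
  rw [h2π] at hbound
  have hπ7 : 2*π < 7 := by linarith [Real.pi_lt_d2]
  calc |(∫ θ in (0:ℝ)..(2*π),
      F (r * Real.cos θ, r * Real.sin θ) (Real.cos θ, Real.sin θ) / r) - L|
      = ‖(∫ θ in (0:ℝ)..(2*π),
        F (r * Real.cos θ, r * Real.sin θ) (Real.cos θ, Real.sin θ) / r) - 0 - L‖ := by
        rw [Real.norm_eq_abs, sub_zero]
    _ ≤ ε' * (2*π) := hbound
    _ < ε' * 7 := by
        apply mul_lt_mul_of_pos_left hπ7 hε'
    _ = ε := by rw [hε'def]; ring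

end Aux

open Real MeasureTheory Filter Set intervalIntegral

/-- for a smooth positive density `ρ` on `ℝ²` and
`Ĩ(c) = ∫_{x²+y² ≤ 2(c-c₀)} ρ dx dy`, writing `r_c = √(2(c-c₀))`, the second derivative
satisfies `Ĩ''(c) = ∫_0^{2π} ∂_r ρ(r_c,θ)/r_c dθ` for `c > c₀`, and
`Ĩ''(c) → π·Δρ(0)` as `c → c₀⁺`, where `Δρ(0) = ∂²_{xx}ρ(0) + ∂²_{yy}ρ(0)`. -/
theorem second_derivative_of_area_function
    (ρ : ℝ × ℝ → ℝ) (c₀ : ℝ) (hρ : ContDiff ℝ (⊤ : ℕ∞) ρ) (hpos : ∀ p, 0 < ρ p) :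
    (∀ c : ℝ, c₀ < c →
        deriv (deriv (fun c' : ℝ =>
          ∫ p in {p : ℝ × ℝ | p.1 ^ 2 + p.2 ^ 2 ≤ 2 * (c' - c₀)}, ρ p)) c
          = ∫ θ in (0 : ℝ)..(2 * π),
              deriv (fun s : ℝ => ρ (s * Real.cos θ, s * Real.sin θ))
                  (Real.sqrt (2 * (c - c₀))) / Real.sqrt (2 * (c - c₀))) ∧
      Tendsto
        (deriv (deriv (fun c' : ℝ =>
          ∫ p in {p : ℝ × ℝ | p.1 ^ 2 + p.2 ^ 2 ≤ 2 * (c' - c₀)}, ρ p)))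
        (nhdsWithin c₀ (Set.Ioi c₀))
        (nhds (π * (deriv (deriv (fun x : ℝ => ρ (x, 0))) 0
          + deriv (deriv (fun y : ℝ => ρ (0, y))) 0))) := by
  constructor
  · intro c hc
    rw [deriv2_eq7 ρ hρ c₀ hc]
    apply intervalIntegral.integral_congr
    intro θ _
    dsimp only
    rw [(hasDerivAt_inner7 ρ hρ (Real.sqrt (2*(c-c₀))) θ).deriv]
  · -- limit part
    have hrt : Tendsto (fun c : ℝ => Real.sqrt (2*(c-c₀)))
        (nhdsWithin c₀ (Set.Ioi c₀)) (nhdsWithin 0 (Set.Ioi 0)) := by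
      rw [tendsto_nhdsWithin_iff]
      constructor
      · have hcont : Continuous fun c : ℝ => Real.sqrt (2*(c-c₀)) := by fun_prop
        have := (hcont.tendsto c₀).mono_left
          (nhdsWithin_le_nhds (s := Set.Ioi c₀))
        simpa using this
      · filter_upwards [self_mem_nhdsWithin] with c hc
        exact Real.sqrt_pos.2 (by simp only [mem_Ioi] at hc; linarith)
    have htend := (tendsto_psi7 ρ hρ).comp hrt
    rw [secondDeriv_x7 ρ hρ, secondDeriv_y7 ρ hρ]
    apply htend.congr'
    filter_upwards [self_mem_nhdsWithin] with c hc
    exact (deriv2_eq7 ρ hρ c₀ hc).symm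
end

section
/- Let a : ℝ → (0,∞) and b : ℝ → ℝ be smooth 2π-periodic functions and r > 0. Suppose (x,y,θ) : ℝ → ℝ³ solves ẋ = cos θ, ẏ = sin θ/a(x), θ̇ = r^{−1}b(x) − (a'(x)/a(x)) sin θ. Let B be an antiderivative of x ↦ a(x)b(x). Then I(t) = a(x(t)) sin θ(t) − r^{−1}B(x(t)) is constant in t. -/
open Real

/-- Clairaut-type first integral for a rotationally invariant magnetic
system `g = dx² + a(x)²dy²`, `b = b(x)` on the cylinder: along solutions of
`ẋ = cos θ, ẏ = sin θ / a(x), θ̇ = r⁻¹ b(x) - (a'(x)/a(x)) sin θ`, the quantity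
`I(t) = a(x(t)) sin θ(t) - r⁻¹ B(x(t))` is constant, where `B' = a·b`. -/
theorem first_integral_rotationally_invariant
    (a b B : ℝ → ℝ) (ha : ContDiff ℝ (⊤ : ℕ∞) a) (hapos : ∀ s, 0 < a s)
    (hb : ContDiff ℝ (⊤ : ℕ∞) b)
    (hpera : ∀ s, a (s + 2 * π) = a s) (hperb : ∀ s, b (s + 2 * π) = b s)
    (r : ℝ) (hr : 0 < r)
    (x y θ : ℝ → ℝ)
    (hx : ∀ t, HasDerivAt x (Real.cos (θ t)) t)
    (hy : ∀ t, HasDerivAt y (Real.sin (θ t) / a (x t)) t)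
    (hθ : ∀ t, HasDerivAt θ
      (r⁻¹ * b (x t) - (deriv a (x t) / a (x t)) * Real.sin (θ t)) t)
    (hB : ∀ s, HasDerivAt B (a s * b s) s) :
    ∀ t₁ t₂ : ℝ,
      a (x t₁) * Real.sin (θ t₁) - r⁻¹ * B (x t₁)
        = a (x t₂) * Real.sin (θ t₂) - r⁻¹ * B (x t₂) := by
  have hI : ∀ t, HasDerivAt (fun t => a (x t) * Real.sin (θ t) - r⁻¹ * B (x t)) 0 t := by
    intro t
    have hax : HasDerivAt (fun t => a (x t)) (deriv a (x t) * Real.cos (θ t)) t :=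
      ((ha.differentiable (by simp) (x t)).hasDerivAt).comp t (hx t)
    have hsin : HasDerivAt (fun t => Real.sin (θ t))
        (Real.cos (θ t) * (r⁻¹ * b (x t) - (deriv a (x t) / a (x t)) * Real.sin (θ t))) t :=
      (Real.hasDerivAt_sin (θ t)).comp t (hθ t)
    have hBx : HasDerivAt (fun t => B (x t)) (a (x t) * b (x t) * Real.cos (θ t)) t :=
      (hB (x t)).comp t (hx t)
    have h : HasDerivAt (fun t => a (x t) * Real.sin (θ t) - r⁻¹ * B (x t)) _ t := (hax.mul hsin).sub (hBx.const_mul r⁻¹)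
    convert h using 1
    have hane : a (x t) ≠ 0 := (hapos _).ne'
    field_simp
    ring
  intro t₁ t₂
  have := is_const_of_deriv_eq_zero (f := fun t => a (x t) * Real.sin (θ t) - r⁻¹ * B (x t))
    (fun t => (hI t).differentiableAt) (fun t => (hI t).deriv) t₁ t₂
  simpa using this
end

section
/- Let b : ℝ → ℝ be smooth, 2π-periodic and positive, B an antiderivative of b, v(u) = 1/b(B⁻¹(u)). Suppose v(u) = 1 + ε sin(ku) for some integer k ≥ 1 and ε ∈ (−1,1)∖{0} (after identifying the period of B with 2π). Then the shift function Δ_r(I₀) = r²∫_{-1}^1 √(1-u²) v'(r(u−I₀)) du vanishes identically in I₀ if and only if J₁(kr) = 0, where J₁(x) = (x/π)∫_{-1}^1 √(1-u²)e^{−ixu}du. -/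
open Real MeasureTheory intervalIntegral

/-- The first Bessel function, via the integral formula
`J₁(x) = (x/π) ∫_{-1}^1 √(1-u²) e^{-ixu} du`. -/
noncomputable def J1 (x : ℝ) : ℂ :=
  ((x / π : ℝ) : ℂ) *
    ∫ u in (-1 : ℝ)..1, (Real.sqrt (1 - u ^ 2) : ℂ) * Complex.exp (-(Complex.I * x * u))

lemma odd_int_zero (f : ℝ → ℝ) (hf : ∀ u, f (-u) = - f u) :
    ∫ u in (-1:ℝ)..1, f u = 0 := by
  have h := intervalIntegral.integral_comp_neg (a := (-1:ℝ)) (b := 1) (f := f)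
  simp only [neg_neg] at h
  have h2 : (∫ u in (-1:ℝ)..1, f (-u)) = ∫ u in (-1:ℝ)..1, (- f u) := by
    exact intervalIntegral.integral_congr (fun u _ => hf u)
  rw [h2, intervalIntegral.integral_neg] at h
  linarith

/-- exotic Zoll examples on the flat torus. Let `b` be smooth, positive and
`2π`-periodic, `B` an antiderivative of `b` with inverse `Binv`, and suppose
`v(u) = 1/b(B⁻¹(u)) = 1 + ε sin(ku)` for some integer `k ≥ 1` and `ε ∈ (-1,1)∖{0}`.
Then the shift function `Δ_r(I₀) = r²∫_{-1}^1 √(1-u²) v'(r(u-I₀)) du` vanishes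
identically in `I₀` if and only if `J₁(kr) = 0`. -/
theorem exotic_zoll_iff_bessel_zero
    (b B Binv : ℝ → ℝ)
    (hb : ContDiff ℝ (⊤ : ℕ∞) b) (hbpos : ∀ s, 0 < b s)
    (hper : ∀ s, b (s + 2 * π) = b s)
    (hB : ∀ s, HasDerivAt B (b s) s)
    (hBinv₁ : Function.LeftInverse Binv B) (hBinv₂ : Function.RightInverse Binv B)
    (k : ℕ) (hk : 1 ≤ k) (ε : ℝ) (hε : ε ∈ Set.Ioo (-1 : ℝ) 1) (hε0 : ε ≠ 0)
    (hv : ∀ u : ℝ, 1 / b (Binv u) = 1 + ε * Real.sin (k * u))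
    (r : ℝ) (hr : 0 < r) :
    (∀ I₀ : ℝ,
        r ^ 2 * ∫ u in (-1 : ℝ)..1,
          Real.sqrt (1 - u ^ 2) * deriv (fun w => 1 / b (Binv w)) (r * (u - I₀)) = 0)
      ↔ J1 (k * r) = 0 := by
  have hkpos : (0:ℝ) < (k:ℝ) := by exact_mod_cast Nat.lt_of_lt_of_le Nat.zero_lt_one hk
  set x : ℝ := (k:ℝ) * r with hxdef
  have hxpos : 0 < x := mul_pos hkpos hr
  -- derivative of v
  have hfun : (fun w => 1 / b (Binv w)) = fun w => 1 + ε * Real.sin ((k:ℝ) * w) :=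
    funext hv
  have hderiv : ∀ w, deriv (fun w => 1 / b (Binv w)) w
      = ε * ((k:ℝ) * Real.cos ((k:ℝ) * w)) := by
    intro w
    rw [hfun]
    have h0 : HasDerivAt (fun w : ℝ => (k:ℝ) * w) (k:ℝ) w := by
      simpa using (hasDerivAt_id w).const_mul (k:ℝ)
    have h1 : HasDerivAt (fun w : ℝ => Real.sin ((k:ℝ) * w))
        (Real.cos ((k:ℝ) * w) * (k:ℝ)) w :=
      (Real.hasDerivAt_sin ((k:ℝ)*w)).comp w h0
    have h2 : HasDerivAt (fun w : ℝ => 1 + ε * Real.sin ((k:ℝ) * w))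
        (ε * ((k:ℝ) * Real.cos ((k:ℝ)*w))) w := by
      have := (h1.const_mul ε).const_add 1
      exact this.congr_deriv (by ring)
    exact h2.deriv
  -- continuity facts
  have hsqrt : Continuous fun u : ℝ => Real.sqrt (1 - u ^ 2) := by fun_prop
  have hcont_c : Continuous fun u : ℝ => Real.sqrt (1 - u ^ 2) * Real.cos (x * u) := by
    fun_prop
  have hcont_s : Continuous fun u : ℝ => Real.sqrt (1 - u ^ 2) * Real.sin (x * u) := by
    fun_prop
  set c : ℝ := ∫ u in (-1:ℝ)..1, Real.sqrt (1 - u ^ 2) * Real.cos (x * u) with hcdef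
  have hs : (∫ u in (-1:ℝ)..1, Real.sqrt (1 - u ^ 2) * Real.sin (x * u)) = 0 := by
    apply odd_int_zero
    intro u
    simp [neg_pow, mul_neg, Real.sin_neg]
  -- key computation of the shift integral
  have key : ∀ I₀ : ℝ,
      (∫ u in (-1:ℝ)..1, Real.sqrt (1 - u ^ 2)
        * deriv (fun w => 1 / b (Binv w)) (r * (u - I₀)))
      = ε * (k:ℝ) * (Real.cos (x * I₀) * c) := by
    intro I₀
    have h1 : ∀ u : ℝ, Real.sqrt (1 - u ^ 2)
        * deriv (fun w => 1 / b (Binv w)) (r * (u - I₀))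
        = (ε * (k:ℝ) * Real.cos (x * I₀)) * (Real.sqrt (1 - u ^ 2) * Real.cos (x * u))
          + (ε * (k:ℝ) * Real.sin (x * I₀)) * (Real.sqrt (1 - u ^ 2) * Real.sin (x * u)) := by
      intro u
      rw [hderiv]
      have hxu : (k:ℝ) * (r * (u - I₀)) = x * u - x * I₀ := by rw [hxdef]; ring
      rw [hxu, Real.cos_sub]
      ring
    rw [intervalIntegral.integral_congr (fun u _ => h1 u),
        intervalIntegral.integral_add
          ((hcont_c.intervalIntegrable _ _).const_mul _)
          ((hcont_s.intervalIntegrable _ _).const_mul _),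
        intervalIntegral.integral_const_mul, intervalIntegral.integral_const_mul,
        hs, ← hcdef]
    ring
  -- J1 in terms of c
  have hJ : J1 x = ((x / π : ℝ) : ℂ) * (c : ℂ) := by
    unfold J1
    congr 1
    have hint : ∀ u : ℝ, (Real.sqrt (1 - u ^ 2) : ℂ) * Complex.exp (-(Complex.I * x * u))
        = ((Real.sqrt (1 - u ^ 2) * Real.cos (x * u) : ℝ) : ℂ)
          - Complex.I * ((Real.sqrt (1 - u ^ 2) * Real.sin (x * u) : ℝ) : ℂ) := by
      intro u
      have : -(Complex.I * (x:ℝ) * (u:ℝ)) = ((-(x * u) : ℝ) : ℂ) * Complex.I := by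
        push_cast; ring
      rw [this, Complex.exp_mul_I, ← Complex.ofReal_cos, ← Complex.ofReal_sin,
        Real.cos_neg, Real.sin_neg]
      push_cast
      ring
    rw [intervalIntegral.integral_congr (fun u _ => hint u)]
    have hic : IntervalIntegrable (fun u : ℝ =>
        ((Real.sqrt (1 - u ^ 2) * Real.cos (x * u) : ℝ) : ℂ)) volume (-1) 1 := by
      apply Continuous.intervalIntegrable; fun_prop
    have his : IntervalIntegrable (fun u : ℝ =>
        Complex.I * ((Real.sqrt (1 - u ^ 2) * Real.sin (x * u) : ℝ) : ℂ)) volume (-1) 1 := by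
      apply Continuous.intervalIntegrable; fun_prop
    rw [intervalIntegral.integral_sub hic his, intervalIntegral.integral_const_mul,
      intervalIntegral.integral_ofReal, intervalIntegral.integral_ofReal, hs, ← hcdef]
    simp
  have hxπ : ((x / π : ℝ) : ℂ) ≠ 0 := by
    simp only [Ne, Complex.ofReal_eq_zero]
    positivity
  constructor
  · intro h
    have h0 := h 0
    rw [key 0] at h0
    have hc0 : c = 0 := by
      have : Real.cos (x * 0) = 1 := by simp
      rw [this] at h0
      have hr2 : r ^ 2 ≠ 0 := by positivity
      have hεk : ε * (k:ℝ) ≠ 0 := mul_ne_zero hε0 (ne_of_gt hkpos)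
      have := mul_eq_zero.mp h0
      rcases this with h' | h'
      · exact absurd h' hr2
      · rcases mul_eq_zero.mp h' with h'' | h''
        · exact absurd h'' hεk
        · linarith [h'']
    rw [hJ, hc0]
    simp
  · intro hJ0 I₀
    have hc0 : (c : ℂ) = 0 := by
      rw [hJ] at hJ0
      exact (mul_eq_zero.mp hJ0).resolve_left hxπ
    have hc0' : c = 0 := by exact_mod_cast hc0
    rw [key I₀, hc0']
    ring
end
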